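/- arXiv:1202.2207 — 4 statements merged into one kernel-verified Lean document; each statement's English description precedes it below -/
import Mathlib

section
/- Let f : I ⊆ ℝ₊ → ℝ be differentiable on I°, let a, b ∈ I° with a < b, and suppose f′ is integrable on [a,b]. Let p > 1, q = p/(p−1), and fix s ∈ (0,1]. If |f′|^q is s-convex in the second sense on [a,b], then for every x ∈ [a,b], |((b−x)·f(b) + (x−a)·f(a))/(b−a) − (1/(b−a))·∫_a^b f(u) du| ≤ (1/(1+p))^{1/p}·(1/(s+1))^{1/q}·{ ((x−a)²/(b−a))·(|f′(x)|^q + |f′(a)|^q)^{1/q} + ((b−x)²/(b−a))·(|f′(x)|^q + |f′(b)|^q)^{1/q} }. -/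
open MeasureTheory Set intervalIntegral Real

/-!
Integrating `(u - x) f'(u)` by parts over `[a, b]` turns `(b - a)` times the left-hand side into
`∫_a^x (u - x) f'(u) du + ∫_x^b (u - x) f'(u) du`. On each piece `[c, d]`, with `L = d - c`,
Hölder's inequality with the weight `|u - x|` (whose `p`-th power integrates to `L^(p+1)/(p+1)`)
leaves `∫ |f'|^q`, and `s`-convexity bounds `|f'(u)|^q` by the endpoint values weighted by
`((u - c)/L)^s` and `((d - u)/L)^s`, each integrating to `L/(s+1)`. Since `1/p + 1/q = 1`, the
powers of `L` combine to `L^((p+1)/p + 1/q) = L^2`.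
-/

def SConvexOn (s : ℝ) (S : Set ℝ) (φ : ℝ → ℝ) : Prop :=
  ∀ x ∈ S, ∀ y ∈ S, ∀ t ∈ Icc (0:ℝ) 1, φ (t * x + (1 - t) * y) ≤ t ^ s * φ x + (1 - t) ^ s * φ y

theorem SConvexOn.le_of_mem_Ioo {s : ℝ} {S : Set ℝ} {φ : ℝ → ℝ} (hφ : SConvexOn s S φ)
    {y z u : ℝ} (hy : y ∈ S) (hz : z ∈ S) (hu : u ∈ Ioo y z) :
    φ u ≤ ((u - y) / (z - y)) ^ s * φ z + ((z - u) / (z - y)) ^ s * φ y := by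
  have hyz : 0 < z - y := by linarith [hu.1, hu.2]
  have h := hφ z hz y hy ((u - y) / (z - y))
    ⟨div_nonneg (by linarith [hu.1]) hyz.le, (div_le_one hyz).2 (by linarith [hu.2])⟩
  have hcomb : (u - y) / (z - y) * z + (1 - (u - y) / (z - y)) * y = u := by
    field_simp; ring
  have hcompl : 1 - (u - y) / (z - y) = (z - u) / (z - y) := by
    field_simp; ring
  rwa [hcomb, hcompl] at h

theorem Real.HolderConjugate.rpow_add_one_rpow_mul_rpow_eq_sq {p q L : ℝ}
    (hpq : p.HolderConjugate q) (hL : 0 ≤ L) :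
    (L ^ (p + 1)) ^ (1 / p) * L ^ (1 / q) = L ^ 2 := by
  have hexp : (p + 1) * (1 / p) + 1 / q = 2 := by
    have := hpq.inv_add_inv_eq_one
    field_simp [hpq.ne_zero] at this ⊢
    linarith
  rw [← rpow_mul hL, ← rpow_add' hL (by rw [hexp]; norm_num), hexp, rpow_two]

theorem integral_abs_sub_rpow {c d e r : ℝ} (hcd : c ≤ d) (hr : -1 < r) (he : e = c ∨ e = d) :
    ∫ u in c..d, |u - e| ^ r = (d - c) ^ (r + 1) / (r + 1) := by
  have hzero : ∫ v in (0:ℝ)..(d - c), |v| ^ r = (d - c) ^ (r + 1) / (r + 1) := by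
    rw [integral_congr fun v hv => by
        rw [abs_of_nonneg (uIcc_of_le (sub_nonneg.2 hcd) ▸ hv).1],
      integral_rpow (.inl hr), zero_rpow (by linarith), sub_zero]
  rcases he with rfl | rfl
  · have h := integral_comp_sub_right (a := e) (b := d) (fun v => |v| ^ r) e
    simp only [sub_self] at h
    rw [h, hzero]
  · have h := integral_comp_sub_left (a := c) (b := e) (fun v => |v| ^ r) e
    simp only [sub_self] at h
    simp_rw [abs_sub_comm _ e]
    rw [h, hzero]

theorem integral_rpow_combination {c d s A B : ℝ} (hcd : c < d) (hs : 0 ≤ s) :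
    ∫ u in c..d, (((u - c) / (d - c)) ^ s * A + ((d - u) / (d - c)) ^ s * B)
      = (d - c) * (A + B) / (s + 1) := by
  have hdc : 0 < d - c := sub_pos.2 hcd
  have hcongr : ∀ u ∈ uIcc c d, ((u - c) / (d - c)) ^ s * A + ((d - u) / (d - c)) ^ s * B
      = (|u - c| ^ s * A + |u - d| ^ s * B) / (d - c) ^ s := by
    intro u hu
    rw [uIcc_of_le hcd.le] at hu
    rw [div_rpow (by linarith [hu.1]) hdc.le, div_rpow (by linarith [hu.2]) hdc.le,
      abs_of_nonneg (by linarith [hu.1] : 0 ≤ u - c), abs_sub_comm,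
      abs_of_nonneg (by linarith [hu.2] : 0 ≤ d - u)]
    ring
  have hint : ∀ e K : ℝ, IntervalIntegrable (fun u => |u - e| ^ s * K) volume c d := fun e K =>
    (((continuous_rpow_const hs).comp (continuous_abs.comp (continuous_sub_right e))).mul
      continuous_const).intervalIntegrable _ _
  rw [integral_congr hcongr, intervalIntegral.integral_div,
    intervalIntegral.integral_add (hint c A) (hint d B),
    intervalIntegral.integral_mul_const, intervalIntegral.integral_mul_const,
    integral_abs_sub_rpow hcd.le (by linarith) (.inl rfl),
    integral_abs_sub_rpow hcd.le (by linarith) (.inr rfl), rpow_add_one hdc.ne']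
  field_simp

theorem integral_le_of_le_rpow_combination {c d s A B : ℝ} (hcd : c < d) (hs : 0 ≤ s)
    {φ : ℝ → ℝ} (hφ : IntervalIntegrable φ volume c d)
    (hbound : ∀ u ∈ Ioo c d, φ u ≤ ((u - c) / (d - c)) ^ s * A + ((d - u) / (d - c)) ^ s * B) :
    ∫ u in c..d, φ u ≤ (d - c) * (A + B) / (s + 1) := by
  rw [← integral_rpow_combination hcd hs]
  refine integral_mono_on_of_le_Ioo hcd.le hφ ?_ hbound
  exact ((((continuous_rpow_const hs).comp ((continuous_sub_right c).div_const _)).mul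
    continuous_const).add (((continuous_rpow_const hs).comp
      ((continuous_sub_left d).div_const _)).mul continuous_const)).intervalIntegrable _ _

theorem abs_intervalIntegral_mul_le_Lp_mul_Lq {p q c d : ℝ} (hpq : p.HolderConjugate q)
    (hcd : c ≤ d) {w g : ℝ → ℝ} (hw : MemLp w (ENNReal.ofReal p) (volume.restrict (Ioc c d)))
    (hg : MemLp g (ENNReal.ofReal q) (volume.restrict (Ioc c d))) :
    |∫ u in c..d, w u * g u| ≤
      (∫ u in c..d, |w u| ^ p) ^ (1 / p) * (∫ u in c..d, |g u| ^ q) ^ (1 / q) := by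
  simp only [integral_of_le hcd]
  calc |∫ u in Ioc c d, w u * g u| ≤ ∫ u in Ioc c d, |w u| * |g u| := by
        simpa only [norm_eq_abs, abs_mul] using norm_integral_le_integral_norm (fun u => w u * g u)
    _ ≤ _ := by simpa only [norm_eq_abs] using integral_mul_norm_le_Lp_mul_Lq hpq hw hg

theorem abs_integral_sub_mul_le {p q s c d e : ℝ} (hpq : p.HolderConjugate q) (hs : 0 ≤ s)
    (hcd : c ≤ d) (he : e = c ∨ e = d) {g : ℝ → ℝ} (hg : IntervalIntegrable g volume c d)
    {A B : ℝ} (hA : 0 ≤ A) (hB : 0 ≤ B)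
    (hbound : ∀ u ∈ Ioo c d,
      |g u| ^ q ≤ ((u - c) / (d - c)) ^ s * A + ((d - u) / (d - c)) ^ s * B) :
    |∫ u in c..d, (u - e) * g u| ≤
      (1 / (1 + p)) ^ (1 / p) * (1 / (s + 1)) ^ (1 / q) * ((d - c) ^ 2 * (A + B) ^ (1 / q)) := by
  rcases hcd.eq_or_lt with rfl | hcd
  · simp
  have hdc : 0 < d - c := sub_pos.2 hcd
  have hp : 0 < p := hpq.pos
  have hq : 0 < q := hpq.symm.pos
  have hIoo : ∀ᵐ u ∂volume.restrict (Ioc c d), u ∈ Ioo c d :=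
    ae_restrict_of_ae_eq_of_ae_restrict Ioo_ae_eq_Ioc (ae_restrict_mem measurableSet_Ioo)
  have hg_le : ∀ u ∈ Ioo c d, |g u| ≤ (A + B) ^ (1 / q) := by
    intro u hu
    have ht : ∀ v : ℝ, 0 ≤ v → v ≤ d - c → (v / (d - c)) ^ s ≤ 1 := fun v hv0 hv1 =>
      rpow_le_one (div_nonneg hv0 hdc.le) ((div_le_one hdc).2 hv1) hs
    rw [one_div, le_rpow_inv_iff_of_pos (abs_nonneg _) (by positivity) hq]
    refine (hbound u hu).trans (add_le_add ?_ ?_)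
    · exact mul_le_of_le_one_left hA (ht _ (by linarith [hu.1]) (by linarith [hu.2]))
    · exact mul_le_of_le_one_left hB (ht _ (by linarith [hu.2]) (by linarith [hu.1]))
  have hgq : MemLp g (ENNReal.ofReal q) (volume.restrict (Ioc c d)) :=
    .of_bound hg.1.aestronglyMeasurable _ (hIoo.mono fun u hu => hg_le u hu)
  have hwp : MemLp (fun u => u - e) (ENNReal.ofReal p) (volume.restrict (Ioc c d)) := by
    refine .of_bound (continuous_sub_right e).aestronglyMeasurable (d - c) (hIoo.mono ?_)
    intro u hu
    rw [norm_eq_abs, abs_le]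
    rcases he with rfl | rfl <;> constructor <;> linarith [hu.1, hu.2]
  have hgq_int : IntervalIntegrable (fun u => |g u| ^ q) volume c d := by
    have h := hgq.integrable_norm_rpow (by simp [hq]) ENNReal.ofReal_ne_top
    rw [ENNReal.toReal_ofReal hq.le] at h
    exact (intervalIntegrable_iff_integrableOn_Ioc_of_le hcd.le).2 h
  calc |∫ u in c..d, (u - e) * g u|
      ≤ (∫ u in c..d, |u - e| ^ p) ^ (1 / p) * (∫ u in c..d, |g u| ^ q) ^ (1 / q) :=
        abs_intervalIntegral_mul_le_Lp_mul_Lq hpq hcd.le hwp hgq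
    _ ≤ ((d - c) ^ (p + 1) / (p + 1)) ^ (1 / p) * ((d - c) * (A + B) / (s + 1)) ^ (1 / q) := by
        rw [integral_abs_sub_rpow hcd.le (by linarith) he]
        gcongr
        · exact intervalIntegral.integral_nonneg hcd.le fun u _ => by positivity
        · exact integral_le_of_le_rpow_combination hcd hs hgq_int hbound
    _ = (1 / (1 + p)) ^ (1 / p) * (1 / (s + 1)) ^ (1 / q) * ((d - c) ^ 2 * (A + B) ^ (1 / q)) := by
        rw [← hpq.rpow_add_one_rpow_mul_rpow_eq_sq hdc.le, div_eq_mul_one_div _ (p + 1),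
          div_eq_mul_one_div _ (s + 1), mul_rpow (by positivity) (by positivity),
          mul_rpow (by positivity) (by positivity), mul_rpow hdc.le (by positivity), add_comm p 1]
        ring

theorem integral_sub_mul_deriv_eq {f f' : ℝ → ℝ} {a b : ℝ}
    (hf : ∀ u ∈ uIcc a b, HasDerivAt f (f' u) u) (hf' : IntervalIntegrable f' volume a b)
    (x : ℝ) :
    ∫ u in a..b, (u - x) * f' u = (b - x) * f b - (a - x) * f a - ∫ u in a..b, f u := by
  simpa using integral_mul_deriv_eq_deriv_mul (fun u _ => (hasDerivAt_id u).sub_const x) hf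
    intervalIntegrable_const hf'

theorem stmt_7_general
    (I : Set ℝ) (hI : Convex ℝ I)
    (f f' : ℝ → ℝ) (a b : ℝ) (ha : a ∈ interior I) (hb : b ∈ interior I) (hab : a < b)
    (hdiff : ∀ y ∈ interior I, HasDerivAt f (f' y) y)
    (hint : IntervalIntegrable f' volume a b)
    (p q : ℝ) (hp : 1 < p) (hq : q = p / (p - 1))
    (s : ℝ) (hs : s ∈ Ioc (0:ℝ) 1)
    (hcvx : ∀ x ∈ Icc a b, ∀ y ∈ Icc a b, ∀ t ∈ Icc (0:ℝ) 1,
      |f' (t * x + (1 - t) * y)| ^ q ≤ t ^ s * |f' x| ^ q + (1 - t) ^ s * |f' y| ^ q)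
    :
    ∀ x ∈ Icc a b,
      |((b - x) * f b + (x - a) * f a) / (b - a) - (1 / (b - a)) * ∫ u in a..b, f u|
        ≤ (1 / (1 + p)) ^ (1 / p) * (1 / (s + 1)) ^ (1 / q) *
            (((x - a) ^ 2 / (b - a)) * (|f' x| ^ q + |f' a| ^ q) ^ (1 / q)
              + ((b - x) ^ 2 / (b - a)) * (|f' x| ^ q + |f' b| ^ q) ^ (1 / q)) := by
  intro x hx
  have hpq : p.HolderConjugate q := (holderConjugate_iff_eq_conjExponent hp).2 hq
  have hφ : SConvexOn s (Icc a b) fun u => |f' u| ^ q := hcvx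
  have hderiv : ∀ u ∈ uIcc a b, HasDerivAt f (f' u) u := fun u hu =>
    hdiff u (hI.interior.segment_subset ha hb ((segment_eq_uIcc a b).symm ▸ hu))
  have hxab : x ∈ uIcc a b := Icc_subset_uIcc hx
  have hw : IntervalIntegrable (fun u => (u - x) * f' u) volume a b :=
    hint.continuousOn_mul (continuous_sub_right x).continuousOn
  have hleft := abs_integral_sub_mul_le hpq hs.1.le hx.1 (.inr rfl)
    (hint.mono_set (uIcc_subset_uIcc_left hxab)) (by positivity) (by positivity)
    fun u hu => hφ.le_of_mem_Ioo (left_mem_Icc.2 hab.le) hx hu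
  have hright := abs_integral_sub_mul_le hpq hs.1.le hx.2 (.inl rfl)
    (hint.mono_set (uIcc_subset_uIcc_right hxab)) (by positivity) (by positivity)
    fun u hu => hφ.le_of_mem_Ioo hx (right_mem_Icc.2 hab.le) hu
  rw [add_comm (|f' b| ^ q)] at hright
  have hLHS : ((b - x) * f b + (x - a) * f a) / (b - a) - (1 / (b - a)) * ∫ u in a..b, f u
      = ((∫ u in a..x, (u - x) * f' u) + ∫ u in x..b, (u - x) * f' u) / (b - a) := by
    rw [integral_add_adjacent_intervals (hw.mono_set (uIcc_subset_uIcc_left hxab))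
      (hw.mono_set (uIcc_subset_uIcc_right hxab)), integral_sub_mul_deriv_eq hderiv hint x]
    ring
  rw [hLHS, abs_div, abs_of_pos (sub_pos.2 hab)]
  exact (div_le_div_of_nonneg_right ((abs_add_le _ _).trans (add_le_add hleft hright))
    (sub_pos.2 hab).le).trans_eq (by ring)

theorem stmt_7
    (I : Set ℝ) (hI : Convex ℝ I) (hIpos : I ⊆ Ioi (0:ℝ))
    (f f' : ℝ → ℝ) (a b : ℝ) (ha : a ∈ interior I) (hb : b ∈ interior I) (hab : a < b)
    (hdiff : ∀ y ∈ interior I, HasDerivAt f (f' y) y)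
    (hint : IntervalIntegrable f' volume a b)
    (p q : ℝ) (hp : 1 < p) (hq : q = p / (p - 1))
    (s : ℝ) (hs : s ∈ Ioc (0:ℝ) 1)
    (hcvx : ∀ x ∈ Icc a b, ∀ y ∈ Icc a b, ∀ t ∈ Icc (0:ℝ) 1,
      |f' (t * x + (1 - t) * y)| ^ q ≤ t ^ s * |f' x| ^ q + (1 - t) ^ s * |f' y| ^ q)
    :
    ∀ x ∈ Icc a b,
      |((b - x) * f b + (x - a) * f a) / (b - a) - (1 / (b - a)) * ∫ u in a..b, f u|
        ≤ (1 / (1 + p)) ^ (1 / p) * (1 / (s + 1)) ^ (1 / q) *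
            (((x - a) ^ 2 / (b - a)) * (|f' x| ^ q + |f' a| ^ q) ^ (1 / q)
              + ((b - x) ^ 2 / (b - a)) * (|f' x| ^ q + |f' b| ^ q) ^ (1 / q)) :=
  stmt_7_general I hI f f' a b ha hb hab hdiff hint p q hp hq s hs hcvx
end

section
/- Let a, b ∈ ℝ with 0 < a < b and let n ∈ ℤ with |n| ≥ 1 and n ∉ {−1, 0}. Then |A(aⁿ, bⁿ) − Lₙⁿ(a, b)| ≤ |n|·((b−a)/12)·( A(a,b)^{n−1} + 2·A(a^{n−1}, b^{n−1}) ). -/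
open MeasureTheory Set intervalIntegral Real

/-!
Integration by parts against `x - m`, with `m = (a + b) / 2`, shows that
`(b - a) * (A(aⁿ, bⁿ) - Lₙⁿ(a, b)) = ∫ₐᵇ n xⁿ⁻¹ (x - m) dx`, the error of the trapezoid rule for
`xⁿ`. The weight `φ x = |n| xⁿ⁻¹` is convex on `(0, ∞)`, so on each half of `[a, b]` it lies below
its chord; integrating the chords against `|x - m|` gives `(b - a)² / 12 * (φ a + φ m + φ b)`.
-/

theorem integral_sub_mul_self_left (u v : ℝ) :
    ∫ x in u..v, (x - u) * (x - u) = (v - u) ^ 3 / 3 := by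
  simp_rw [← sq]
  rw [integral_comp_sub_right (fun y => y ^ 2)]
  norm_num

theorem integral_sub_mul_self_right (u v : ℝ) :
    ∫ x in u..v, (v - x) * (v - x) = (v - u) ^ 3 / 3 := by
  simp_rw [← sq]
  rw [integral_comp_sub_left (fun y => y ^ 2)]
  norm_num

theorem integral_sub_left_mul_sub_right (u v : ℝ) :
    ∫ x in u..v, (x - u) * (v - x) = (v - u) ^ 3 / 6 := by
  have h : ∀ x, (x - u) * (v - x) = (v - u) * (x - u) - (x - u) ^ 2 := fun x => by ring
  simp_rw [h]
  rw [integral_sub (Continuous.intervalIntegrable (by fun_prop) _ _)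
    (Continuous.intervalIntegrable (by fun_prop) _ _), intervalIntegral.integral_const_mul,
    integral_comp_sub_right (fun y => y ^ 2), integral_comp_sub_right (fun y => y)]
  norm_num
  ring

theorem integral_deriv_mul_sub_midpoint {f f' : ℝ → ℝ} {a b : ℝ}
    (hf : ∀ x ∈ uIcc a b, HasDerivAt f (f' x) x) (hf' : IntervalIntegrable f' volume a b) :
    ∫ x in a..b, f' x * (x - (a + b) / 2) = (b - a) * (f a + f b) / 2 - ∫ x in a..b, f x := by
  have h := integral_mul_deriv_eq_deriv_mul (u := fun x => x - (a + b) / 2) (u' := fun _ => 1)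
    (fun x _ => (hasDerivAt_id x).sub_const _) hf intervalIntegrable_const hf'
  simp only [one_mul] at h
  simp_rw [mul_comm (f' _), h]
  ring

section Convex

variable {φ w : ℝ → ℝ} {u v : ℝ}

theorem ConvexOn.sub_mul_le_of_mem_Icc (hφ : ConvexOn ℝ (Icc u v) φ) {x : ℝ} (hx : x ∈ Icc u v) :
    (v - u) * φ x ≤ (v - x) * φ u + (x - u) * φ v := by
  rcases hx.1.eq_or_lt with rfl | hux
  · simp
  rcases hx.2.eq_or_lt with rfl | hxv
  · simp
  exact hφ.secant_mono_aux1 (left_mem_Icc.2 (hux.trans hxv).le)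
    (right_mem_Icc.2 (hux.trans hxv).le) hux hxv

theorem ConvexOn.sub_mul_integral_mul_le (hφ : ConvexOn ℝ (Icc u v) φ)
    (hφc : ContinuousOn φ (Icc u v)) (hwc : ContinuousOn w (Icc u v))
    (hw : ∀ x ∈ Icc u v, 0 ≤ w x) (huv : u ≤ v) :
    (v - u) * ∫ x in u..v, φ x * w x ≤
      φ u * (∫ x in u..v, (v - x) * w x) + φ v * ∫ x in u..v, (x - u) * w x := by
  have hint : ∀ {ψ : ℝ → ℝ}, ContinuousOn ψ (Icc u v) → IntervalIntegrable ψ volume u v :=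
    fun hψ => hψ.intervalIntegrable_of_Icc huv
  rw [← intervalIntegral.integral_const_mul, ← intervalIntegral.integral_const_mul,
    ← intervalIntegral.integral_const_mul,
    ← integral_add (hint (ψ := fun x => φ u * ((v - x) * w x)) (by fun_prop))
      (hint (ψ := fun x => φ v * ((x - u) * w x)) (by fun_prop))]
  refine integral_mono_on huv (hint (by fun_prop)) (hint (by fun_prop)) fun x hx => ?_
  linear_combination mul_le_mul_of_nonneg_right (hφ.sub_mul_le_of_mem_Icc hx) (hw x hx)

theorem ConvexOn.integral_mul_sub_right_le (hφ : ConvexOn ℝ (Icc u v) φ)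
    (hφc : ContinuousOn φ (Icc u v)) (huv : u < v) :
    ∫ x in u..v, φ x * (v - x) ≤ (v - u) ^ 2 * (2 * φ u + φ v) / 6 := by
  have h := hφ.sub_mul_integral_mul_le hφc (w := fun x => v - x) (by fun_prop)
    (fun x hx => sub_nonneg.2 hx.2) huv.le
  rw [integral_sub_mul_self_right, integral_sub_left_mul_sub_right] at h
  refine le_of_mul_le_mul_left ?_ (sub_pos.2 huv)
  linear_combination h

theorem ConvexOn.integral_mul_sub_left_le (hφ : ConvexOn ℝ (Icc u v) φ)
    (hφc : ContinuousOn φ (Icc u v)) (huv : u < v) :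
    ∫ x in u..v, φ x * (x - u) ≤ (v - u) ^ 2 * (φ u + 2 * φ v) / 6 := by
  have h := hφ.sub_mul_integral_mul_le hφc (w := fun x => x - u) (by fun_prop)
    (fun x hx => sub_nonneg.2 hx.1) huv.le
  simp_rw [mul_comm (v - _)] at h
  rw [integral_sub_mul_self_left, integral_sub_left_mul_sub_right] at h
  refine le_of_mul_le_mul_left ?_ (sub_pos.2 huv)
  linear_combination h

end Convex

theorem abs_integral_mul_sub_midpoint_le {g φ : ℝ → ℝ} {a b : ℝ} (hab : a < b)
    (hφ : ConvexOn ℝ (Icc a b) φ) (hφc : ContinuousOn φ (Icc a b))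
    (hgc : ContinuousOn g (Icc a b)) (hgφ : ∀ x ∈ Icc a b, |g x| ≤ φ x) :
    |∫ x in a..b, g x * (x - (a + b) / 2)| ≤
      (b - a) ^ 2 / 12 * (φ a + φ ((a + b) / 2) + φ b) := by
  obtain ⟨ham, hmb⟩ : a < (a + b) / 2 ∧ (a + b) / 2 < b := ⟨by linarith, by linarith⟩
  set m := (a + b) / 2
  have hleft : Icc a m ⊆ Icc a b := Icc_subset_Icc_right hmb.le
  have hright : Icc m b ⊆ Icc a b := Icc_subset_Icc_left ham.le
  have hint : ∀ {u v : ℝ}, Icc u v ⊆ Icc a b → u ≤ v → ∀ {ψ : ℝ → ℝ},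
      ContinuousOn ψ (Icc a b) → IntervalIntegrable ψ volume u v :=
    fun hs huv _ hψ => (hψ.mono hs).intervalIntegrable_of_Icc huv
  have hgm : ContinuousOn (fun x => g x * (x - m)) (Icc a b) := by fun_prop
  have hL : |∫ x in a..m, g x * (x - m)| ≤ ∫ x in a..m, φ x * (m - x) := by
    refine norm_integral_le_of_norm_le (f := fun x => g x * (x - m)) ham.le
      (ae_of_all _ fun x hx => ?_) (hint hleft ham.le (ψ := fun x => φ x * (m - x)) (by fun_prop))
    rw [Real.norm_eq_abs, abs_mul, abs_of_nonpos (by linarith [hx.2] : x - m ≤ 0), neg_sub]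
    exact mul_le_mul_of_nonneg_right (hgφ x (hleft (Ioc_subset_Icc_self hx))) (by linarith [hx.2])
  have hR : |∫ x in m..b, g x * (x - m)| ≤ ∫ x in m..b, φ x * (x - m) := by
    refine norm_integral_le_of_norm_le (f := fun x => g x * (x - m)) hmb.le
      (ae_of_all _ fun x hx => ?_) (hint hright hmb.le (ψ := fun x => φ x * (x - m)) (by fun_prop))
    rw [Real.norm_eq_abs, abs_mul, abs_of_nonneg (by linarith [hx.1] : 0 ≤ x - m)]
    exact mul_le_mul_of_nonneg_right (hgφ x (hright (Ioc_subset_Icc_self hx))) (by linarith [hx.1])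
  have hL' := (hφ.subset hleft (convex_Icc _ _)).integral_mul_sub_right_le (hφc.mono hleft) ham
  have hR' := (hφ.subset hright (convex_Icc _ _)).integral_mul_sub_left_le (hφc.mono hright) hmb
  rw [← integral_add_adjacent_intervals (hint hleft ham.le hgm) (hint hright hmb.le hgm)]
  calc _ ≤ |∫ x in a..m, g x * (x - m)| + |∫ x in m..b, g x * (x - m)| := abs_add_le _ _
    _ ≤ (m - a) ^ 2 * (2 * φ a + φ m) / 6 + (b - m) ^ 2 * (φ m + 2 * φ b) / 6 := by linarith
    _ = _ := by ring

theorem stmt_17_general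
    (a b : ℝ) (ha : 0 < a) (hab : a < b) (n : ℤ) (hn1 : n ≠ -1) :
    |(a ^ n + b ^ n) / 2 - (b ^ (n + 1) - a ^ (n + 1)) / (((n : ℝ) + 1) * (b - a))|
      ≤ |(n : ℝ)| * ((b - a) / 12) *
          (((a + b) / 2) ^ (n - 1) + 2 * ((a ^ (n - 1) + b ^ (n - 1)) / 2)) := by
  have hpos : ∀ x ∈ Icc a b, 0 < x := fun x hx => ha.trans_le hx.1
  have hderiv : ∀ x ∈ uIcc a b, HasDerivAt (fun x : ℝ => x ^ n) (n * x ^ (n - 1)) x :=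
    fun x hx => hasDerivAt_zpow n x (Or.inl (hpos x (uIcc_of_le hab.le ▸ hx)).ne')
  have hcont : ContinuousOn (fun x : ℝ => x ^ (n - 1)) (Icc a b) :=
    continuousOn_id.zpow₀ _ fun x hx => Or.inl (hpos x hx).ne'
  have htrap := integral_deriv_mul_sub_midpoint hderiv
    ((continuousOn_const.mul hcont).intervalIntegrable_of_Icc hab.le)
  rw [integral_zpow (Or.inr ⟨hn1, fun h => (hpos 0 (uIcc_of_le hab.le ▸ h)).false⟩)] at htrap
  have hbound := abs_integral_mul_sub_midpoint_le (g := fun x => n * x ^ (n - 1))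
    (φ := fun x => |(n : ℝ)| * x ^ (n - 1)) hab
    (((convexOn_zpow (n - 1)).subset hpos (convex_Icc a b)).smul
      (abs_nonneg (n : ℝ)))
    (continuousOn_const.mul hcont) (continuousOn_const.mul hcont) fun x hx => by
      rw [abs_mul, abs_of_pos (zpow_pos (hpos x hx) _)]
  have hn1R : (n : ℝ) + 1 ≠ 0 := by exact_mod_cast (by omega : n + 1 ≠ 0)
  have hba : 0 < b - a := sub_pos.2 hab
  have hE : (a ^ n + b ^ n) / 2 - (b ^ (n + 1) - a ^ (n + 1)) / (((n : ℝ) + 1) * (b - a)) =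
      (∫ x in a..b, (n : ℝ) * x ^ (n - 1) * (x - (a + b) / 2)) / (b - a) := by
    rw [htrap]; field_simp
  rw [hE, abs_div, abs_of_pos hba, div_le_iff₀ hba]
  refine hbound.trans_eq ?_
  ring

theorem stmt_17
    (a b : ℝ) (ha : 0 < a) (hab : a < b) (n : ℤ) (hn : 1 ≤ |n|) (hn1 : n ≠ -1) :
    |(a ^ n + b ^ n) / 2 - (b ^ (n + 1) - a ^ (n + 1)) / (((n : ℝ) + 1) * (b - a))|
      ≤ |(n : ℝ)| * ((b - a) / 12) *
          (((a + b) / 2) ^ (n - 1) + 2 * ((a ^ (n - 1) + b ^ (n - 1)) / 2)) :=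
  stmt_17_general a b ha hab n hn1
end

section
/- Let a, b ∈ ℝ with 0 < a < b. Then |A(a⁻¹, b⁻¹) − L(a,b)⁻¹| ≤ ((b−a)/12)·( 1/A(a,b)² + 2·K(a,b)²/G(a,b)⁴ ). -/
/-! The quantity `(b - a) * (A(a⁻¹, b⁻¹) - L(a, b)⁻¹)` is the error `E a b` of the trapezoidal
rule for `∫ t in a..b, t⁻¹ = log b - log a` (`trapezoidLogError`). As a function of the right
endpoint, `E a` vanishes at `a` and has derivative `(x - a)² / (2 a x²) ≥ 0`, while
`(x - a)² (a² + x²) / (12 a² x²)` has the larger derivative `(x - a) (a³ + x³) / (6 a² x³)`.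
Comparing derivatives gives `0 ≤ E a b ≤ (b - a)² (a² + b²) / (12 a² b²)`, and the right-hand side
is exactly `(b - a)² / 12 · 2 K² / G⁴`, so the bound holds even without its `1 / A²` term. -/

open Real Set

theorem le_of_hasDerivAt_le_of_le {f g f' g' : ℝ → ℝ} {a b : ℝ} (hab : a ≤ b)
    (hf : ∀ x ∈ Icc a b, HasDerivAt f (f' x) x) (hg : ∀ x ∈ Icc a b, HasDerivAt g (g' x) x)
    (ha : f a ≤ g a) (hderiv : ∀ x ∈ Ico a b, f' x ≤ g' x) : f b ≤ g b :=
  image_le_of_deriv_right_le_deriv_boundary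
    (fun x hx => (hf x hx).continuousAt.continuousWithinAt)
    (fun x hx => (hf x (Ico_subset_Icc_self hx)).hasDerivWithinAt) ha
    (fun x hx => (hg x hx).continuousAt.continuousWithinAt)
    (fun x hx => (hg x (Ico_subset_Icc_self hx)).hasDerivWithinAt) hderiv
    (right_mem_Icc.2 hab)

noncomputable def trapezoidLogError (a x : ℝ) : ℝ :=
  (x - a) * (a⁻¹ + x⁻¹) / 2 - (log x - log a)

noncomputable def trapezoidLogErrorBound (a x : ℝ) : ℝ :=
  (x - a) ^ 2 * (a ^ 2 + x ^ 2) / (12 * a ^ 2 * x ^ 2)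

section

variable {a x : ℝ}

theorem hasDerivAt_trapezoidLogError (ha : a ≠ 0) (hx : x ≠ 0) :
    HasDerivAt (trapezoidLogError a) ((x - a) ^ 2 / (2 * a * x ^ 2)) x := by
  have h := ((((hasDerivAt_id x).sub_const a).mul
    ((hasDerivAt_inv hx).const_add a⁻¹)).div_const 2).sub ((hasDerivAt_log hx).sub_const (log a))
  refine h.congr_deriv ?_
  simp only [id_eq]
  field_simp
  ring

theorem hasDerivAt_trapezoidLogErrorBound (ha : a ≠ 0) (hx : x ≠ 0) :
    HasDerivAt (trapezoidLogErrorBound a)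
      ((x - a) * (a ^ 3 + x ^ 3) / (6 * a ^ 2 * x ^ 3)) x := by
  have hnum : HasDerivAt (fun y : ℝ => (y - a) ^ 2 * (a ^ 2 + y ^ 2))
      (2 * (x - a) * (a ^ 2 + x ^ 2) + (x - a) ^ 2 * (2 * x)) x := by
    refine ((((hasDerivAt_id x).sub_const a).pow 2).mul
      (((hasDerivAt_id x).pow 2).const_add (a ^ 2))).congr_deriv ?_
    simp only [id_eq, Pi.pow_apply]
    ring
  have hden : HasDerivAt (fun y : ℝ => 12 * a ^ 2 * y ^ 2) (12 * a ^ 2 * (2 * x)) x := by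
    simpa using (hasDerivAt_pow 2 x).const_mul (12 * a ^ 2)
  refine (hnum.div hden (by positivity)).congr_deriv ?_
  field_simp
  ring

theorem trapezoidLogError_self : trapezoidLogError a a = 0 := by
  simp [trapezoidLogError]

theorem trapezoidLogErrorBound_self : trapezoidLogErrorBound a a = 0 := by
  simp [trapezoidLogErrorBound]

end

section

variable {a b : ℝ}

theorem trapezoidLogError_nonneg (ha : 0 < a) (hab : a ≤ b) : 0 ≤ trapezoidLogError a b := by
  refine trapezoidLogError_self (a := a) ▸
    le_of_hasDerivAt_le_of_le hab (fun x _ => hasDerivAt_const x (trapezoidLogError a a))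
      (fun x hx => hasDerivAt_trapezoidLogError ha.ne' (ha.trans_le hx.1).ne') le_rfl ?_
  intro x _
  positivity

theorem trapezoidLogError_le_bound (ha : 0 < a) (hab : a ≤ b) :
    trapezoidLogError a b ≤ trapezoidLogErrorBound a b := by
  refine le_of_hasDerivAt_le_of_le hab
    (fun x hx => hasDerivAt_trapezoidLogError ha.ne' (ha.trans_le hx.1).ne')
    (fun x hx => hasDerivAt_trapezoidLogErrorBound ha.ne' (ha.trans_le hx.1).ne')
    (by rw [trapezoidLogError_self, trapezoidLogErrorBound_self]) ?_
  intro x hx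
  have hx0 : 0 < x := ha.trans_le hx.1
  have hxa : 0 ≤ x - a := sub_nonneg.2 hx.1
  rw [div_le_div_iff₀ (by positivity) (by positivity)]
  have key : (x - a) * (a ^ 3 + x ^ 3) * (2 * a * x ^ 2) - (x - a) ^ 2 * (6 * a ^ 2 * x ^ 3)
      = 2 * a * x ^ 2 * (x - a) * ((x - a) ^ 3 + 2 * a ^ 3) := by ring
  rw [← sub_nonneg, key]
  positivity

theorem trapezoidLogError_eq (hab : a < b) :
    trapezoidLogError a b = (b - a) * ((a⁻¹ + b⁻¹) / 2 - (log b - log a) / (b - a)) := by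
  have : b - a ≠ 0 := sub_ne_zero.2 hab.ne'
  unfold trapezoidLogError
  field_simp

end

theorem stmt_18
    (a b : ℝ) (ha : 0 < a) (hab : a < b) :
    |(a⁻¹ + b⁻¹) / 2 - (Real.log b - Real.log a) / (b - a)|
      ≤ ((b - a) / 12) *
          (1 / ((a + b) / 2) ^ 2
            + 2 * (Real.sqrt ((a ^ 2 + b ^ 2) / 2)) ^ 2 / (Real.sqrt (a * b)) ^ 4) := by
  set D := (a⁻¹ + b⁻¹) / 2 - (log b - log a) / (b - a)
  have hba : 0 < b - a := sub_pos.2 hab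
  have hE := trapezoidLogError_eq hab
  have hD_nonneg : 0 ≤ D :=
    nonneg_of_mul_nonneg_right (hE ▸ trapezoidLogError_nonneg ha hab.le) hba
  have hD_le :
      (b - a) * D ≤ (b - a) * ((b - a) / 12 * (2 * ((a ^ 2 + b ^ 2) / 2) / (a * b) ^ 2)) := by
    have h := hE ▸ trapezoidLogError_le_bound ha hab.le
    convert h using 1
    unfold trapezoidLogErrorBound
    field_simp
  have hK : sqrt ((a ^ 2 + b ^ 2) / 2) ^ 2 = (a ^ 2 + b ^ 2) / 2 := sq_sqrt (by positivity)
  have hG : sqrt (a * b) ^ 4 = (a * b) ^ 2 := by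
    rw [show 4 = 2 * 2 from rfl, pow_mul, sq_sqrt (mul_pos ha (ha.trans hab)).le]
  rw [abs_of_nonneg hD_nonneg, hK, hG, mul_add]
  have hA : 0 ≤ (b - a) / 12 * (1 / ((a + b) / 2) ^ 2) :=
    mul_nonneg (by linarith) (by positivity)
  linarith [le_of_mul_le_mul_left hD_le hba]
end

section
/- Let a, b ∈ ℝ with 0 < a < b, let n ∈ ℤ with |n| ≥ 1 and n ∉ {−1, 0}, and let q > 1. Then |A(aⁿ, bⁿ) − Lₙⁿ(a, b)| ≤ |n|·(b−a)·2^{1/q − 3}·3^{−1/q}·{ ( A(a,b)^{q(n−1)}/2 + a^{q(n−1)} )^{1/q} + ( A(a,b)^{q(n−1)}/2 + b^{q(n−1)} )^{1/q} }. -/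
open MeasureTheory Set intervalIntegral Real
open scoped Interval

/-! `A(aⁿ, bⁿ) - Lₙⁿ(a, b)` is the error of the trapezoid rule for `f x = x ^ n` on `[a, b]`.
Integrating by parts against `x - m`, `m = (a + b) / 2`, writes it as
`(b - a)⁻¹ ∫ (x - m) f' x`. As `|f'| = |n| x ^ (n - 1)` is convex on `(0, ∞)`, bounding it by its
secants on `[a, m]` and `[m, b]` gives `|n| (b - a) / 12 * (a ^ (n-1) + m ^ (n-1) + b ^ (n-1))`,
and the weighted Hölder inequality `x / 2 + y ≤ (3 / 2) ^ (1 - 1/q) (x ^ q / 2 + y ^ q) ^ (1/q)`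
turns each half into the stated `q`-th power means. -/

theorem integral_sub_right_mul_secant (a c A C : ℝ) :
    ∫ x in a..c, (x - a) * ((c - x) * A + (x - a) * C) = (c - a) ^ 3 * (A + 2 * C) / 6 := by
  have hpoly : ∀ x, (x - a) * ((c - x) * A + (x - a) * C) =
      (c - a) * A * (x - a) + (C - A) * (x - a) ^ 2 := fun x => by ring
  simp_rw [hpoly]
  rw [intervalIntegral.integral_add (by apply Continuous.intervalIntegrable; fun_prop)
      (by apply Continuous.intervalIntegrable; fun_prop),
    intervalIntegral.integral_const_mul, intervalIntegral.integral_const_mul,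
    integral_comp_sub_right (fun x => x), integral_comp_sub_right (fun x => x ^ 2), integral_id,
    integral_pow]
  ring

theorem integral_sub_left_mul_secant (a c A C : ℝ) :
    ∫ x in a..c, (c - x) * ((c - x) * A + (x - a) * C) = (c - a) ^ 3 * (2 * A + C) / 6 := by
  have hpoly : ∀ x, (c - x) * ((c - x) * A + (x - a) * C) =
      (c - a) * C * (c - x) + (A - C) * (c - x) ^ 2 := fun x => by ring
  simp_rw [hpoly]
  rw [intervalIntegral.integral_add (by apply Continuous.intervalIntegrable; fun_prop)
      (by apply Continuous.intervalIntegrable; fun_prop),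
    intervalIntegral.integral_const_mul, intervalIntegral.integral_const_mul,
    integral_comp_sub_left (fun x => x), integral_comp_sub_left (fun x => x ^ 2), integral_id,
    integral_pow]
  ring

theorem ConvexOn.integral_mul_le_integral_mul_secant {a c : ℝ} {w g : ℝ → ℝ}
    (hg : ConvexOn ℝ (Icc a c) g) (hgc : ContinuousOn g (Icc a c))
    (hw : ContinuousOn w (Icc a c)) (hw0 : ∀ x ∈ Ioo a c, 0 ≤ w x) (hac : a < c) :
    ∫ x in a..c, w x * g x ≤ (∫ x in a..c, w x * ((c - x) * g a + (x - a) * g c)) / (c - a) := by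
  rw [← intervalIntegral.integral_div]
  refine integral_mono_on_of_le_Ioo hac.le ?_ ?_ fun x hx => ?_
  · exact (hw.mul hgc).intervalIntegrable_of_Icc hac.le
  · exact ((hw.mul (by fun_prop)).div_const _).intervalIntegrable_of_Icc hac.le
  · have hsec := hg.secant_mono_aux1 (left_mem_Icc.2 hac.le) (right_mem_Icc.2 hac.le) hx.1 hx.2
    rw [mul_div_assoc]
    exact mul_le_mul_of_nonneg_left ((le_div_iff₀ (sub_pos.2 hac)).2 (by linarith)) (hw0 x hx)

theorem ConvexOn.integral_sub_right_mul_le {a c : ℝ} {g : ℝ → ℝ}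
    (hg : ConvexOn ℝ (Icc a c) g) (hgc : ContinuousOn g (Icc a c)) (hac : a < c) :
    ∫ x in a..c, (x - a) * g x ≤ (c - a) ^ 2 * (g a + 2 * g c) / 6 := by
  refine (hg.integral_mul_le_integral_mul_secant hgc (by fun_prop)
    (fun x hx => sub_nonneg.2 hx.1.le) hac).trans_eq ?_
  rw [integral_sub_right_mul_secant]
  field_simp [(sub_pos.2 hac).ne']

theorem ConvexOn.integral_sub_left_mul_le {a c : ℝ} {g : ℝ → ℝ}
    (hg : ConvexOn ℝ (Icc a c) g) (hgc : ContinuousOn g (Icc a c)) (hac : a < c) :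
    ∫ x in a..c, (c - x) * g x ≤ (c - a) ^ 2 * (2 * g a + g c) / 6 := by
  refine (hg.integral_mul_le_integral_mul_secant hgc (by fun_prop)
    (fun x hx => sub_nonneg.2 hx.2.le) hac).trans_eq ?_
  rw [integral_sub_left_mul_secant]
  field_simp [(sub_pos.2 hac).ne']

theorem ConvexOn.integral_abs_sub_midpoint_mul_le {a b : ℝ} {g : ℝ → ℝ}
    (hg : ConvexOn ℝ (Icc a b) g) (hgc : ContinuousOn g (Icc a b)) (hab : a < b) :
    ∫ x in a..b, |x - (a + b) / 2| * g x ≤ (b - a) ^ 2 * (g a + g ((a + b) / 2) + g b) / 12 := by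
  set m := (a + b) / 2 with hm
  have ham : a < m := by linarith
  have hmb : m < b := by linarith
  have hint : IntervalIntegrable (fun x => |x - m| * g x) volume a b :=
    ((continuous_id.sub continuous_const).abs.continuousOn.mul hgc).intervalIntegrable_of_Icc
      hab.le
  have hleft : ∫ x in a..m, |x - m| * g x = ∫ x in a..m, (m - x) * g x := by
    refine integral_congr fun x hx => ?_
    rw [uIcc_of_le ham.le] at hx
    rw [abs_of_nonpos (by linarith [hx.2]), neg_sub]
  have hright : ∫ x in m..b, |x - m| * g x = ∫ x in m..b, (x - m) * g x := by
    refine integral_congr fun x hx => ?_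
    rw [uIcc_of_le hmb.le] at hx
    rw [abs_of_nonneg (by linarith [hx.1])]
  rw [← integral_add_adjacent_intervals (hint.mono_set (uIcc_subset_uIcc_left ?_))
    (hint.mono_set (uIcc_subset_uIcc_right ?_)), hleft, hright]
  · have hL := (hg.subset (Icc_subset_Icc_right hmb.le) (convex_Icc a m)).integral_sub_left_mul_le
      (hgc.mono (Icc_subset_Icc_right hmb.le)) ham
    have hR := (hg.subset (Icc_subset_Icc_left ham.le) (convex_Icc m b)).integral_sub_right_mul_le
      (hgc.mono (Icc_subset_Icc_left ham.le)) hmb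
    have hma : m - a = (b - a) / 2 := by rw [hm]; ring
    have hbm : b - m = (b - a) / 2 := by rw [hm]; ring
    rw [hma] at hL
    rw [hbm] at hR
    linarith
  all_goals rw [uIcc_of_le hab.le]; exact ⟨ham.le, hmb.le⟩

theorem integral_sub_midpoint_mul_deriv {f f' : ℝ → ℝ} {a b : ℝ}
    (hf : ∀ x ∈ [[a, b]], HasDerivAt f (f' x) x) (hf' : IntervalIntegrable f' volume a b) :
    ∫ x in a..b, (x - (a + b) / 2) * f' x = (b - a) * (f a + f b) / 2 - ∫ x in a..b, f x := by
  rw [integral_mul_deriv_eq_deriv_mul (fun x _ => (hasDerivAt_id' x).sub_const ((a + b) / 2)) hf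
    intervalIntegrable_const hf']
  simp only [one_mul]
  ring

theorem abs_trapezoid_sub_average_le {f f' : ℝ → ℝ} {a b : ℝ}
    (hf : ∀ x ∈ Icc a b, HasDerivAt f (f' x) x) (hf' : ContinuousOn f' (Icc a b))
    (hconv : ConvexOn ℝ (Icc a b) fun x => |f' x|) (hab : a < b) :
    |(f a + f b) / 2 - (∫ x in a..b, f x) / (b - a)| ≤
      (b - a) * (|f' a| + |f' ((a + b) / 2)| + |f' b|) / 12 := by
  have hba : 0 < b - a := sub_pos.2 hab
  have hid := integral_sub_midpoint_mul_deriv (uIcc_of_le hab.le ▸ hf)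
    (hf'.intervalIntegrable_of_Icc hab.le)
  have herror : (f a + f b) / 2 - (∫ x in a..b, f x) / (b - a) =
      (∫ x in a..b, (x - (a + b) / 2) * f' x) / (b - a) := by
    rw [hid]; field_simp
  rw [herror, abs_div, abs_of_pos hba, div_le_iff₀ hba]
  calc |∫ x in a..b, (x - (a + b) / 2) * f' x|
      ≤ ∫ x in a..b, |x - (a + b) / 2| * |f' x| := by
        simpa only [abs_mul] using
          abs_integral_le_integral_abs (f := fun x => (x - (a + b) / 2) * f' x) hab.le
    _ ≤ (b - a) ^ 2 * (|f' a| + |f' ((a + b) / 2)| + |f' b|) / 12 :=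
        hconv.integral_abs_sub_midpoint_mul_le hf'.abs hab
    _ = _ := by ring

theorem div_two_add_le_rpow_mean {x y q : ℝ} (hx : 0 ≤ x) (hy : 0 ≤ y) (hq : 1 ≤ q) :
    x / 2 + y ≤ (3 / 2) ^ (1 - q⁻¹) * (x ^ q / 2 + y ^ q) ^ q⁻¹ := by
  have h := inner_le_weight_mul_Lp_of_nonneg Finset.univ hq ![1 / 2, 1] ![x, y]
    (by simp [Fin.forall_fin_two]) (by simp [Fin.forall_fin_two, hx, hy])
  norm_num [Fin.sum_univ_two] at h
  convert h using 3 <;> ring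

theorem abs_zpow_trapezoid_sub_le {a b : ℝ} (ha : 0 < a) (hab : a < b) {n : ℤ} (hn : n ≠ -1) :
    |(a ^ n + b ^ n) / 2 - (b ^ (n + 1) - a ^ (n + 1)) / (((n : ℝ) + 1) * (b - a))| ≤
      |(n : ℝ)| * (b - a) / 12 * (a ^ (n - 1) + ((a + b) / 2) ^ (n - 1) + b ^ (n - 1)) := by
  have hpos : ∀ x ∈ Icc a b, 0 < x := fun x hx => ha.trans_le hx.1
  have hconv : ConvexOn ℝ (Icc a b) fun x => |(n : ℝ) * x ^ (n - 1)| :=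
    (((convexOn_zpow (n - 1)).subset hpos (convex_Icc a b)).smul (abs_nonneg (n : ℝ))).congr
      fun x hx => by simp [abs_mul, abs_of_pos (zpow_pos (hpos x hx) _)]
  have htrap := abs_trapezoid_sub_average_le (f := fun x => x ^ n)
    (fun x hx => hasDerivAt_zpow n x (Or.inl (hpos x hx).ne'))
    (continuousOn_const.mul ((continuousOn_zpow₀ (n - 1)).mono fun x hx => (hpos x hx).ne'))
    hconv hab
  have hzero : (0 : ℝ) ∉ [[a, b]] := by
    rw [uIcc_of_le hab.le]; exact fun h => lt_irrefl 0 (hpos 0 h)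
  rw [integral_zpow (Or.inr ⟨hn, hzero⟩), div_div] at htrap
  have hm : 0 < (a + b) / 2 := by linarith
  simp only [abs_mul, abs_of_pos (zpow_pos ha _), abs_of_pos (zpow_pos hm _),
    abs_of_pos (zpow_pos (ha.trans hab) _)] at htrap
  exact htrap.trans_eq (by ring)

theorem two_rpow_sub_three_mul_three_rpow_neg (t : ℝ) :
    (2 : ℝ) ^ (t - 3) * 3 ^ (-t) = (3 / 2) ^ (1 - t) / 12 := by
  rw [rpow_sub two_pos, rpow_sub (by norm_num), rpow_one, rpow_neg (by norm_num),
    div_rpow (by norm_num) (by norm_num), show (2 : ℝ) ^ (3 : ℝ) = 8 by norm_num]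
  field_simp
  ring

theorem stmt_19_general
    (a b : ℝ) (ha : 0 < a) (hab : a < b) (n : ℤ) (hn1 : n ≠ -1)
    (q : ℝ) (hq : 1 < q) :
    |(a ^ n + b ^ n) / 2 - (b ^ (n + 1) - a ^ (n + 1)) / (((n : ℝ) + 1) * (b - a))|
      ≤ |(n : ℝ)| * (b - a) * (2 : ℝ) ^ (1 / q - 3) * (3 : ℝ) ^ (-(1 / q)) *
          ((((a + b) / 2) ^ (q * ((n : ℝ) - 1)) / 2 + a ^ (q * ((n : ℝ) - 1))) ^ (1 / q)
            + (((a + b) / 2) ^ (q * ((n : ℝ) - 1)) / 2 + b ^ (q * ((n : ℝ) - 1))) ^ (1 / q)) := by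
  have hb : 0 < b := ha.trans hab
  have hm : 0 < (a + b) / 2 := by positivity
  have hrpow : ∀ x : ℝ, 0 < x → x ^ (q * ((n : ℝ) - 1)) = (x ^ (n - 1)) ^ q := fun x hx => by
    rw [mul_comm, rpow_mul hx.le]; norm_cast
  simp only [one_div, hrpow _ hm, hrpow _ ha, hrpow _ hb]
  rw [mul_assoc _ ((2 : ℝ) ^ (q⁻¹ - 3)), two_rpow_sub_three_mul_three_rpow_neg]
  set m := (a + b) / 2
  calc _ ≤ _ := abs_zpow_trapezoid_sub_le ha hab hn1
    _ = |(n : ℝ)| * (b - a) / 12 *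
          ((m ^ (n - 1) / 2 + a ^ (n - 1)) + (m ^ (n - 1) / 2 + b ^ (n - 1))) := by ring
    _ ≤ |(n : ℝ)| * (b - a) / 12 *
          ((3 / 2) ^ (1 - q⁻¹) * ((m ^ (n - 1)) ^ q / 2 + (a ^ (n - 1)) ^ q) ^ q⁻¹ +
            (3 / 2) ^ (1 - q⁻¹) * ((m ^ (n - 1)) ^ q / 2 + (b ^ (n - 1)) ^ q) ^ q⁻¹) := by
      gcongr <;> exact div_two_add_le_rpow_mean (by positivity) (by positivity) hq.le
    _ = _ := by ring

theorem stmt_19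
    (a b : ℝ) (ha : 0 < a) (hab : a < b) (n : ℤ) (hn : 1 ≤ |n|) (hn1 : n ≠ -1)
    (q : ℝ) (hq : 1 < q) :
    |(a ^ n + b ^ n) / 2 - (b ^ (n + 1) - a ^ (n + 1)) / (((n : ℝ) + 1) * (b - a))|
      ≤ |(n : ℝ)| * (b - a) * (2 : ℝ) ^ (1 / q - 3) * (3 : ℝ) ^ (-(1 / q)) *
          ((((a + b) / 2) ^ (q * ((n : ℝ) - 1)) / 2 + a ^ (q * ((n : ℝ) - 1))) ^ (1 / q)
            + (((a + b) / 2) ^ (q * ((n : ℝ) - 1)) / 2 + b ^ (q * ((n : ℝ) - 1))) ^ (1 / q)) :=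
  stmt_19_general a b ha hab n hn1 q hq
end
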